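/- (Correctness of de Casteljau's algorithm.) Let d ≥ 0, let b₀,…,b_d be points of ℝ³, and fix t ∈ ℝ. Define recursively b⁰_i := b_i for 0 ≤ i ≤ d, and bʳ_i := (1−t)·bʳ⁻¹_i + t·bʳ⁻¹_{i+1} for 1 ≤ r ≤ d and 0 ≤ i ≤ d−r. Then b^d_0 = Σ_{k=0}^{d} B^d_k(t) · b_k. -/
import Mathlib


/-- The `k`-th Bernstein polynomial of degree `d`: `B^d_k(t) = C(d,k)(1−t)^{d−k} t^k`. -/
noncomputable def bernstein' (d k : ℕ) (t : ℝ) : ℝ :=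
  (d.choose k : ℝ) * (1 - t) ^ (d - k) * t ^ k

/-- The de Casteljau recursion for control points `b : ℕ → ℝ³` and parameter `t`:
`b⁰_i = b_i` and `bʳ_i = (1−t)·bʳ⁻¹_i + t·bʳ⁻¹_{i+1}`.
`deCasteljau t b r i` is `bʳ_i`. -/
noncomputable def deCasteljau (t : ℝ) (b : ℕ → Fin 3 → ℝ) : ℕ → ℕ → Fin 3 → ℝ
  | 0, i => b i
  | r + 1, i => (1 - t) • deCasteljau t b r i + t • deCasteljau t b r (i + 1)

lemma bern_succ (r k : ℕ) (t : ℝ) :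
    bernstein' (r+1) (k+1) t = (1-t) * bernstein' r (k+1) t + t * bernstein' r k t := by
  unfold bernstein'
  rcases le_or_gt (k+1) r with h | h
  · have h1 : r + 1 - (k+1) = (r - (k+1)) + 1 := by omega
    have h2 : r - k = (r - (k+1)) + 1 := by omega
    rw [Nat.choose_succ_succ, h1, h2]
    push_cast
    ring
  · rcases eq_or_lt_of_le (Nat.succ_le_of_lt h) with h' | h'
    · have hk : k = r := by omega
      subst hk
      simp [Nat.choose_succ_self]
      ring
    · have hk1 : r.choose (k+1) = 0 := Nat.choose_eq_zero_of_lt (by omega)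
      have hk2 : r.choose k = 0 := Nat.choose_eq_zero_of_lt (by omega)
      have hk3 : (r+1).choose (k+1) = 0 := Nat.choose_eq_zero_of_lt (by omega)
      simp [hk1, hk2, hk3]

lemma bern_zero (r : ℕ) (t : ℝ) : bernstein' r 0 t = (1-t)^r := by
  simp [bernstein']

lemma deCasteljau_aux (t : ℝ) (b : ℕ → Fin 3 → ℝ) :
    ∀ r i, deCasteljau t b r i = ∑ k ∈ Finset.range (r + 1), bernstein' r k t • b (i + k) := by
  intro r
  induction r with
  | zero => intro i; simp [deCasteljau, bernstein']
  | succ r ih =>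
    intro i
    rw [deCasteljau, ih i, ih (i+1), Finset.smul_sum, Finset.smul_sum]
    rw [Finset.sum_range_succ' (fun k => bernstein' (r+1) k t • b (i + k))]
    have e1 : ∀ k, bernstein' (r+1) (k+1) t • b (i + (k+1)) =
        ((1-t) * bernstein' r (k+1) t) • b (i + (k+1)) + (t * bernstein' r k t) • b (i + (k+1)) := by
      intro k; rw [← add_smul, ← bern_succ]
    simp only [e1, Finset.sum_add_distrib]
    rw [Finset.sum_range_succ' (fun k => (1-t) • bernstein' r k t • b (i + k))]
    rw [Finset.sum_range_succ (fun k => ((1-t) * bernstein' r (k+1) t) • b (i + (k+1)))]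
    have hz : bernstein' r (r+1) t = 0 := by
      simp [bernstein', Nat.choose_eq_zero_of_lt]
    have h0 : bernstein' (r+1) 0 t = (1-t) * bernstein' r 0 t := by
      rw [bern_zero, bern_zero]; ring
    have hidx : ∀ k, i + 1 + k = i + (k+1) := by intro k; omega
    simp only [hz, h0, hidx, smul_smul, mul_zero, zero_smul, add_zero]
    abel

/-- Correctness of de Casteljau's algorithm: `b^d_0 = Σ_{k=0}^{d} B^d_k(t) · b_k`. -/
theorem deCasteljau_eq_bernstein_sum (d : ℕ) (b : ℕ → Fin 3 → ℝ) (t : ℝ) :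
    deCasteljau t b d 0 = ∑ k ∈ Finset.range (d + 1), bernstein' d k t • b k := by
  simpa using deCasteljau_aux t b d 0
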